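/- Let T : X → X be an invertible nonsingular transformation of a σ-finite measure space (X, ν) with Radon–Nikodym derivative ω(x) = d(ν∘T)/dν (x) > 0 a.e. Let m be the measure on ℝ>0 with density s ↦ s⁻². Then the Maharam extension T̃ : X × ℝ>0 → X × ℝ>0, defined by T̃(x, s) = (T(x), ω(x)·s), preserves the product measure ν ⊗ m. -/

import Mathlib

open MeasureTheory Set

open ENNReal in
lemma m_scale (m : Measure ℝ)
    (hm : m = (volume.restrict (Set.Ioi (0 : ℝ))).withDensity
      (fun s => ENNReal.ofReal ((s ^ 2)⁻¹)))
    {c : ℝ} (hc : 0 < c) {A : Set ℝ} (hA : MeasurableSet A) :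
    m ((fun s => c * s) ⁻¹' A) = ENNReal.ofReal c * m A := by
  have hmeasmul : Measurable (fun s : ℝ => c * s) := measurable_const_mul c
  have hpre : MeasurableSet ((fun s => c * s) ⁻¹' A) := hmeasmul hA
  have key : ∀ S : Set ℝ, MeasurableSet S → m S =
      ∫⁻ t, (S ∩ Ioi 0).indicator (fun t => ENNReal.ofReal ((t ^ 2)⁻¹)) t ∂volume := by
    intro S hS
    rw [hm, withDensity_apply _ hS, Measure.restrict_restrict hS,
      ← lintegral_indicator (hS.inter measurableSet_Ioi)]
  rw [key _ hpre, key _ hA]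
  have hset : (fun s => c * s) ⁻¹' A ∩ Ioi 0 = (fun s => c * s) ⁻¹' (A ∩ Ioi 0) := by
    ext s
    simp only [mem_inter_iff, mem_preimage, mem_Ioi]
    constructor
    · rintro ⟨h1, h2⟩; exact ⟨h1, mul_pos hc h2⟩
    · rintro ⟨h1, h2⟩; exact ⟨h1, by nlinarith⟩
  rw [hset]
  set g : ℝ → ℝ≥0∞ := (A ∩ Ioi 0).indicator (fun t => ENNReal.ofReal (((t / c) ^ 2)⁻¹)) with hg
  have hgmeas : Measurable g := by
    apply Measurable.indicator _ (hA.inter measurableSet_Ioi)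
    exact (((measurable_id.div_const c).pow_const 2).inv).ennreal_ofReal
  have hcomp : ∀ s, ((fun s => c * s) ⁻¹' (A ∩ Ioi 0)).indicator
      (fun t => ENNReal.ofReal ((t ^ 2)⁻¹)) s = g (c * s) := by
    intro s
    rw [hg]
    by_cases h : c * s ∈ A ∩ Ioi 0
    · rw [indicator_of_mem (mem_preimage.mpr h), indicator_of_mem h,
        mul_div_cancel_left₀ _ hc.ne']
    · rw [indicator_of_notMem (fun hs => h (mem_preimage.mp hs)), indicator_of_notMem h]
  calc ∫⁻ s, ((fun s => c * s) ⁻¹' (A ∩ Ioi 0)).indicator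
        (fun t => ENNReal.ofReal ((t ^ 2)⁻¹)) s ∂volume
      = ∫⁻ s, g (c * s) ∂volume := by simp_rw [hcomp]
    _ = ∫⁻ t, g t ∂(Measure.map (fun s => c * s) volume) :=
        (lintegral_map hgmeas hmeasmul).symm
    _ = ENNReal.ofReal |c⁻¹| * ∫⁻ t, g t ∂volume := by
        rw [Real.map_volume_mul_left hc.ne', lintegral_smul_measure, smul_eq_mul]
    _ = ENNReal.ofReal c * ∫⁻ t, (A ∩ Ioi 0).indicator
        (fun t => ENNReal.ofReal ((t ^ 2)⁻¹)) t ∂volume := by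
        have : g = fun t => ENNReal.ofReal (c ^ 2) *
            (A ∩ Ioi 0).indicator (fun t => ENNReal.ofReal ((t ^ 2)⁻¹)) t := by
          funext t
          by_cases h : t ∈ A ∩ Ioi 0
          · simp only [hg, indicator_of_mem h]
            rw [← ENNReal.ofReal_mul (by positivity)]
            congr 1
            field_simp
          · simp [hg, indicator_of_notMem h]
        have hind : Measurable ((A ∩ Ioi 0).indicator (fun t : ℝ => ENNReal.ofReal ((t ^ 2)⁻¹))) :=
          Measurable.indicator ((measurable_id.pow_const 2).inv.ennreal_ofReal)
            (hA.inter measurableSet_Ioi)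
        rw [this, lintegral_const_mul _ hind]
        rw [← mul_assoc, ← ENNReal.ofReal_mul (abs_nonneg _), abs_of_pos (inv_pos.mpr hc)]
        congr 2
        field_simp


/-- Let `T` be an invertible nonsingular transformation of a σ-finite measure space
`(X, ν)` with a.e.-positive Radon–Nikodym derivative `ω = d(ν∘T)/dν` (equivalently
`T_*(ω·ν) = ν`), and let `m` be the measure on `(0, ∞)` with density `s ↦ s⁻²`.  Then the
Maharam extension `T̃(x, s) = (T x, ω(x)·s)` preserves the product measure `ν ⊗ m`. -/
theorem maharam_extension_measure_preserving {X : Type*} [MeasurableSpace X]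
    (ν : Measure X) [SigmaFinite ν] (T : X ≃ᵐ X)
    (ω : X → ℝ) (hωmeas : Measurable ω) (hωpos : ∀ᵐ x ∂ν, 0 < ω x)
    (hRN : Measure.map T (ν.withDensity fun x => ENNReal.ofReal (ω x)) = ν)
    (m : Measure ℝ)
    (hm : m = (volume.restrict (Set.Ioi (0 : ℝ))).withDensity
      (fun s => ENNReal.ofReal ((s ^ 2)⁻¹))) :
    ∀ B : Set (X × ℝ), MeasurableSet B →
      (ν.prod m) ((fun p : X × ℝ => (T p.1, ω p.1 * p.2)) ⁻¹' B) = (ν.prod m) B := by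
  intro B hB
  haveI : SFinite m := by rw [hm]; infer_instance
  have hmeasF : Measurable (fun p : X × ℝ => (T p.1, ω p.1 * p.2)) :=
    (T.measurable.comp measurable_fst).prodMk
      ((hωmeas.comp measurable_fst).mul measurable_snd)
  have hpre : MeasurableSet ((fun p : X × ℝ => (T p.1, ω p.1 * p.2)) ⁻¹' B) := hmeasF hB
  rw [Measure.prod_apply hpre, Measure.prod_apply hB]
  have hgmeas : Measurable (fun y => m (Prod.mk y ⁻¹' B)) :=
    measurable_measure_prodMk_left hB
  have h1 : ∀ᵐ x ∂ν,
      m (Prod.mk x ⁻¹' ((fun p : X × ℝ => (T p.1, ω p.1 * p.2)) ⁻¹' B)) =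
      ENNReal.ofReal (ω x) * m (Prod.mk (T x) ⁻¹' B) := by
    filter_upwards [hωpos] with x hx
    have hset : Prod.mk x ⁻¹' ((fun p : X × ℝ => (T p.1, ω p.1 * p.2)) ⁻¹' B) =
        (fun s => ω x * s) ⁻¹' (Prod.mk (T x) ⁻¹' B) := rfl
    rw [hset, m_scale m hm hx (measurable_prodMk_left hB)]
  rw [lintegral_congr_ae h1]
  calc ∫⁻ x, ENNReal.ofReal (ω x) * m (Prod.mk (T x) ⁻¹' B) ∂ν
      = ∫⁻ x, m (Prod.mk (T x) ⁻¹' B)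
          ∂(ν.withDensity fun x => ENNReal.ofReal (ω x)) := by
        exact (lintegral_withDensity_eq_lintegral_mul ν hωmeas.ennreal_ofReal
          (hgmeas.comp T.measurable)).symm
    _ = ∫⁻ y, m (Prod.mk y ⁻¹' B)
          ∂(Measure.map T (ν.withDensity fun x => ENNReal.ofReal (ω x))) :=
        (lintegral_map hgmeas T.measurable).symm
    _ = ∫⁻ y, m (Prod.mk y ⁻¹' B) ∂ν := by rw [hRN]
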